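/- If 𝒜 is a bounded, irreducible family of subadditive, order-preserving, homogeneous maps on ℝⁿ_{≥0} with generalized spectral radius r(𝒜) = 1, then the semigroup 𝒜⁺ = ⋃_{m>0} 𝒜^m is bounded (i.e., sup_{f ∈ 𝒜⁺} ‖f‖ < ∞). -/

import Mathlib

open Filter Topology Set

noncomputable section

/-- A wedge in a real normed space: a convex set closed under positive scalar multiplication. -/
def IsWedge {X : Type*} [NormedAddCommGroup X] [NormedSpace ℝ X] (W : Set X) : Prop :=
  Convex ℝ W ∧ ∀ c : ℝ, 0 < c → ∀ x ∈ W, c • x ∈ W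

/-- A closed cone: closed, convex, closed under positive scalar multiplication, K ∩ (−K) = {0}. -/
def IsClosedCone {X : Type*} [NormedAddCommGroup X] [NormedSpace ℝ X] (K : Set X) : Prop :=
  IsClosed K ∧ Convex ℝ K ∧ (∀ c : ℝ, 0 < c → ∀ x ∈ K, c • x ∈ K) ∧ K ∩ (-K) = {0}

/-- A polyhedral cone: intersection of finitely many closed halfspaces through the origin. -/
def IsPolyhedralCone {X : Type*} [NormedAddCommGroup X] [NormedSpace ℝ X] (K : Set X) : Prop :=
  ∃ (k : ℕ) (φ : Fin k → (X →ₗ[ℝ] ℝ)), K = {x | ∀ i, 0 ≤ φ i x}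

/-- `f` maps `W` into itself and is positively homogeneous on `W`. -/
def HomogOn {X : Type*} [NormedAddCommGroup X] [NormedSpace ℝ X] (f : X → X) (W : Set X) : Prop :=
  Set.MapsTo f W W ∧ ∀ c : ℝ, 0 < c → ∀ x ∈ W, f (c • x) = c • f x

/-- `f` is order-preserving with respect to the order induced by the cone `K`. -/
def OrderPresOn {X : Type*} [NormedAddCommGroup X] [NormedSpace ℝ X] (f : X → X) (K : Set X) : Prop :=
  ∀ x ∈ K, ∀ y ∈ K, y - x ∈ K → f y - f x ∈ K

/-- `f` is subadditive on `K`: f(x+y) ≤ f(x)+f(y) in the cone order. -/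
def SubaddOn {X : Type*} [NormedAddCommGroup X] [NormedSpace ℝ X] (f : X → X) (K : Set X) : Prop :=
  ∀ x ∈ K, ∀ y ∈ K, (f x + f y) - f (x + y) ∈ K

/-- The norm of a homogeneous map on `W`: sup of ‖f x‖ over unit vectors of `W`. -/
def opNormW {X : Type*} [NormedAddCommGroup X] (f : X → X) (W : Set X) : ℝ :=
  sSup ((fun x => ‖f x‖) '' {x ∈ W | ‖x‖ = 1})

/-- A bounded homogeneous map on `W`. -/
def BoundedMapOn {X : Type*} [NormedAddCommGroup X] (f : X → X) (W : Set X) : Prop :=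
  ∃ C : ℝ, ∀ x ∈ W, ‖f x‖ ≤ C * ‖x‖

/-- A bounded family of homogeneous maps on `W`. -/
def BoundedFamOn {X : Type*} [NormedAddCommGroup X] (A : Set (X → X)) (W : Set X) : Prop :=
  ∃ C : ℝ, ∀ f ∈ A, ∀ x ∈ W, ‖f x‖ ≤ C * ‖x‖

/-- `famPow A m` = 𝒜^m, the set of m-fold compositions of maps from `A` (with 𝒜^0 = {id}). -/
def famPow {X : Type*} (A : Set (X → X)) : ℕ → Set (X → X)
  | 0 => {id}
  | m + 1 => {h | ∃ f ∈ A, ∃ g ∈ famPow A m, h = f ∘ g}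

/-- The composition of two families of maps. -/
def compFam {X : Type*} (A B : Set (X → X)) : Set (X → X) :=
  {h | ∃ f ∈ A, ∃ g ∈ B, h = f ∘ g}

/-- The Bonsall cone spectral radius r(f) = inf_{n>0} ‖f^n‖^{1/n}. -/
def coneSpecRad {X : Type*} [NormedAddCommGroup X] (f : X → X) (W : Set X) : ℝ :=
  ⨅ n : ℕ+, (opNormW (f^[(n : ℕ)]) W) ^ (((n : ℕ) : ℝ)⁻¹)

/-- sup_{f ∈ 𝒜^m} ‖f‖^{1/m}. -/
def jointTerm {X : Type*} [NormedAddCommGroup X] (A : Set (X → X)) (W : Set X) (m : ℕ) : ℝ :=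
  sSup ((fun f => (opNormW f W) ^ ((m : ℝ)⁻¹)) '' famPow A m)

/-- sup_{f ∈ 𝒜^m} r(f)^{1/m}. -/
def genTerm {X : Type*} [NormedAddCommGroup X] (A : Set (X → X)) (W : Set X) (m : ℕ) : ℝ :=
  sSup ((fun f => (coneSpecRad f W) ^ ((m : ℝ)⁻¹)) '' famPow A m)

/-- The joint spectral radius r̂(𝒜) = inf_{m>0} sup_{f ∈ 𝒜^m} ‖f‖^{1/m}. -/
def jointRad {X : Type*} [NormedAddCommGroup X] (A : Set (X → X)) (W : Set X) : ℝ :=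
  ⨅ m : ℕ+, jointTerm A W (m : ℕ)

/-- The generalized spectral radius r(𝒜) = sup_{m>0} sup_{f ∈ 𝒜^m} r(f)^{1/m}. -/
def genRad {X : Type*} [NormedAddCommGroup X] (A : Set (X → X)) (W : Set X) : ℝ :=
  ⨆ m : ℕ+, genTerm A W (m : ℕ)

/-- β_m = inf_{f ∈ 𝒜^m} ‖f‖. -/
def subBeta {X : Type*} [NormedAddCommGroup X] (A : Set (X → X)) (W : Set X) (m : ℕ) : ℝ :=
  sInf ((fun f => opNormW f W) '' famPow A m)

/-- γ_m = inf_{f ∈ 𝒜^m} r(f). -/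
def subGamma {X : Type*} [NormedAddCommGroup X] (A : Set (X → X)) (W : Set X) (m : ℕ) : ℝ :=
  sInf ((fun f => coneSpecRad f W) '' famPow A m)

/-- F_m^d = f_m ∘ ⋯ ∘ f_1 for a sequence d of maps. -/
def seqComp {X : Type*} (d : ℕ → X → X) : ℕ → X → X
  | 0 => id
  | m + 1 => d m ∘ seqComp d m

/-- The standard cone ℝⁿ_{≥0}. -/
def stdCone (n : ℕ) : Set (Fin n → ℝ) := {x | ∀ i, 0 ≤ x i}

/-- The closed face F_J of the standard cone. -/
def stdFace {n : ℕ} (J : Set (Fin n)) : Set (Fin n → ℝ) :=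
  {x | (∀ i, 0 ≤ x i) ∧ ∀ i ∉ J, x i = 0}

/-- A family of maps on ℝⁿ_{≥0} is irreducible if no non-trivial closed face is invariant
under every member of the family. -/
def IrreducibleFam {n : ℕ} (A : Set ((Fin n → ℝ) → Fin n → ℝ)) : Prop :=
  ¬ ∃ J : Set (Fin n), J.Nonempty ∧ J ≠ Set.univ ∧ ∀ f ∈ A, Set.MapsTo f (stdFace J) (stdFace J)

/-!
Irreducibility gives, for all `i, j`, a map `gᵢⱼ ∈ 𝒜^m` with `gᵢⱼ(eᵢ)ⱼ > 0`. If some `f ∈ 𝒜⁺` had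
`f(eⱼ)ᵢ > 1 / gᵢⱼ(eᵢ)ⱼ`, then `h = f ∘ gᵢⱼ` would satisfy `h(eᵢ) ≥ c eᵢ` with `c > 1`; iterating
gives `r(h) ≥ c` and hence `r(𝒜) > 1`. So the entries `f(eⱼ)ᵢ` are bounded uniformly over `𝒜⁺`,
and `f(x) ≤ ∑ⱼ xⱼ f(eⱼ)`, from subadditivity and homogeneity, bounds `‖f‖`.
-/

section FamilyOfMaps

variable {X : Type*}

lemma famPow_add {A : Set (X → X)} {a b : ℕ} {f g : X → X} (hf : f ∈ famPow A a)
    (hg : g ∈ famPow A b) : f ∘ g ∈ famPow A (a + b) := by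
  induction a generalizing f with
  | zero =>
    obtain rfl : f = id := hf
    simpa using hg
  | succ a ih =>
    obtain ⟨p, hp, q, hq, rfl⟩ := hf
    rw [Nat.add_right_comm]
    exact ⟨p, hp, q ∘ g, ih hq, rfl⟩

lemma mapsTo_of_mem_famPow {A : Set (X → X)} {W : Set X} (hA : ∀ f ∈ A, MapsTo f W W) :
    ∀ {m : ℕ}, ∀ f ∈ famPow A m, MapsTo f W W
  | 0, _, rfl => mapsTo_id W
  | _ + 1, _, ⟨p, hp, q, hq, rfl⟩ => (hA p hp).comp (mapsTo_of_mem_famPow hA q hq)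

variable [NormedAddCommGroup X]

lemma norm_apply_le_pow_of_mem_famPow {A : Set (X → X)} {W : Set X} {C : ℝ}
    (hA : ∀ f ∈ A, MapsTo f W W) (hC : ∀ f ∈ A, ∀ x ∈ W, ‖f x‖ ≤ C * ‖x‖)
    (hC0 : 0 ≤ C) :
    ∀ {m : ℕ}, ∀ f ∈ famPow A m, ∀ x ∈ W, ‖f x‖ ≤ C ^ m * ‖x‖
  | 0, _, rfl, x, _ => by simp
  | m + 1, _, ⟨p, hp, q, hq, rfl⟩, x, hx =>
    calc ‖p (q x)‖ ≤ C * ‖q x‖ := hC p hp _ (mapsTo_of_mem_famPow hA q hq hx)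
      _ ≤ C * (C ^ m * ‖x‖) :=
        mul_le_mul_of_nonneg_left (norm_apply_le_pow_of_mem_famPow hA hC hC0 q hq x hx) hC0
      _ = C ^ (m + 1) * ‖x‖ := by ring

lemma opNormW_nonneg (f : X → X) (W : Set X) : 0 ≤ opNormW f W :=
  Real.sSup_nonneg <| by rintro _ ⟨x, _, rfl⟩; exact norm_nonneg _

lemma opNormW_le {f : X → X} {W : Set X} {K : ℝ} (hK : 0 ≤ K)
    (hf : ∀ x ∈ W, ‖f x‖ ≤ K * ‖x‖) : opNormW f W ≤ K :=
  Real.sSup_le (by rintro _ ⟨x, ⟨hx, hx1⟩, rfl⟩; simpa [hx1] using hf x hx) hK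

lemma norm_apply_le_opNormW {f : X → X} {W : Set X} {K : ℝ}
    (hf : ∀ x ∈ W, ‖f x‖ ≤ K * ‖x‖) {x : X} (hx : x ∈ W) (hx1 : ‖x‖ = 1) :
    ‖f x‖ ≤ opNormW f W :=
  le_csSup ⟨K, by rintro _ ⟨y, ⟨hy, hy1⟩, rfl⟩; simpa [hy1] using hf y hy⟩
    ⟨x, ⟨hx, hx1⟩, rfl⟩

lemma coneSpecRad_nonneg (f : X → X) (W : Set X) : 0 ≤ coneSpecRad f W :=
  Real.iInf_nonneg fun _ => Real.rpow_nonneg (opNormW_nonneg _ _) _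

lemma coneSpecRad_le_opNormW (f : X → X) (W : Set X) : coneSpecRad f W ≤ opNormW f W := by
  have h := ciInf_le (f := fun k : ℕ+ => (opNormW (f^[(k : ℕ)]) W) ^ (((k : ℕ) : ℝ)⁻¹))
    ⟨0, by rintro _ ⟨k, rfl⟩; exact Real.rpow_nonneg (opNormW_nonneg _ _) _⟩ 1
  simpa [coneSpecRad] using h

lemma one_lt_genRad_of_one_lt_coneSpecRad {A : Set (X → X)} {W : Set X}
    (hA : ∀ f ∈ A, MapsTo f W W) (hbdd : BoundedFamOn A W) {N : ℕ} (hN : 0 < N) {h : X → X}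
    (hh : h ∈ famPow A N) (h1 : 1 < coneSpecRad h W) : 1 < genRad A W := by
  obtain ⟨C, hC⟩ := hbdd
  have hC' : ∀ f ∈ A, ∀ x ∈ W, ‖f x‖ ≤ max C 0 * ‖x‖ := fun f hf x hx =>
    (hC f hf x hx).trans (mul_le_mul_of_nonneg_right (le_max_left C 0) (norm_nonneg x))
  have hterm : ∀ M : ℕ, M ≠ 0 → ∀ f ∈ famPow A M,
      coneSpecRad f W ^ ((M : ℝ)⁻¹) ≤ max C 0 := by
    intro M hM f hf
    have hf' : coneSpecRad f W ≤ max C 0 ^ M :=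
      (coneSpecRad_le_opNormW f W).trans <| opNormW_le (by positivity)
        (norm_apply_le_pow_of_mem_famPow hA hC' (le_max_right C 0) f hf)
    calc coneSpecRad f W ^ ((M : ℝ)⁻¹) ≤ (max C 0 ^ M) ^ ((M : ℝ)⁻¹) :=
          Real.rpow_le_rpow (coneSpecRad_nonneg f W) hf' (by positivity)
      _ = max C 0 := Real.pow_rpow_inv_natCast (le_max_right C 0) hM
  have hbddN : BddAbove ((fun f => coneSpecRad f W ^ ((N : ℝ)⁻¹)) '' famPow A N) :=
    ⟨max C 0, by rintro _ ⟨f, hf, rfl⟩; exact hterm N hN.ne' f hf⟩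
  have hbddRange : BddAbove (range fun M : ℕ+ => genTerm A W M) :=
    ⟨max C 0, by
      rintro _ ⟨M, rfl⟩
      exact Real.sSup_le (by rintro _ ⟨f, hf, rfl⟩; exact hterm M M.ne_zero f hf)
        (le_max_right C 0)⟩
  calc 1 < coneSpecRad h W ^ ((N : ℝ)⁻¹) := Real.one_lt_rpow h1 (by positivity)
    _ ≤ genTerm A W N := le_csSup hbddN ⟨h, hh, rfl⟩
    _ ≤ genRad A W := le_ciSup hbddRange ⟨N, hN⟩

end FamilyOfMaps

section StdCone

variable {n : ℕ}

lemma norm_le_norm_of_nonneg_of_le {x y : Fin n → ℝ} (hx : 0 ≤ x) (hxy : x ≤ y) :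
    ‖x‖ ≤ ‖y‖ :=
  (pi_norm_le_iff_of_nonneg (norm_nonneg y)).2 fun i => by
    rw [Real.norm_of_nonneg (hx i)]
    exact (hxy i).trans ((le_abs_self _).trans (norm_le_pi_norm y i))

lemma single_one_nonneg (j : Fin n) : (0 : Fin n → ℝ) ≤ Pi.single j 1 :=
  Pi.single_nonneg.2 zero_le_one

lemma single_apply_le {x : Fin n → ℝ} (hx : 0 ≤ x) (i : Fin n) : Pi.single i (x i) ≤ x := by
  intro j
  by_cases h : j = i
  · subst h; simp
  · simpa [Pi.single_eq_of_ne h] using hx j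

/-- `HomogOn`, `OrderPresOn` and `SubaddOn` on `stdCone n`, in the pointwise order. -/
structure IsMonoSubaddHomog (f : (Fin n → ℝ) → Fin n → ℝ) : Prop where
  nonneg : ∀ x, 0 ≤ x → 0 ≤ f x
  map_smul : ∀ c : ℝ, 0 < c → ∀ x, 0 ≤ x → f (c • x) = c • f x
  mono : ∀ x y, 0 ≤ x → x ≤ y → f x ≤ f y
  map_add_le : ∀ x y, 0 ≤ x → 0 ≤ y → f (x + y) ≤ f x + f y

namespace IsMonoSubaddHomog

variable {f g : (Fin n → ℝ) → Fin n → ℝ}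

lemma of_homogOn_orderPresOn_subaddOn (hH : HomogOn f (stdCone n))
    (hO : OrderPresOn f (stdCone n)) (hS : SubaddOn f (stdCone n)) : IsMonoSubaddHomog f where
  nonneg _ hx := hH.1 hx
  map_smul := hH.2
  mono x y hx hxy := sub_nonneg.1 (hO x hx y (hx.trans hxy) (sub_nonneg.2 hxy))
  map_add_le x y hx hy := sub_nonneg.1 (hS x hx y hy)

protected lemma id : IsMonoSubaddHomog (id : (Fin n → ℝ) → Fin n → ℝ) where
  nonneg _ hx := hx
  map_smul _ _ _ _ := rfl
  mono _ _ _ hxy := hxy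
  map_add_le _ _ _ _ := le_rfl

lemma comp (hf : IsMonoSubaddHomog f) (hg : IsMonoSubaddHomog g) :
    IsMonoSubaddHomog (f ∘ g) where
  nonneg x hx := hf.nonneg _ (hg.nonneg x hx)
  map_smul c hc x hx := by
    simp only [Function.comp_apply, hg.map_smul c hc x hx, hf.map_smul c hc _ (hg.nonneg x hx)]
  mono x y hx hxy := hf.mono _ _ (hg.nonneg x hx) (hg.mono x y hx hxy)
  map_add_le x y hx hy :=
    (hf.mono _ _ (hg.nonneg _ (add_nonneg hx hy)) (hg.map_add_le x y hx hy)).trans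
      (hf.map_add_le _ _ (hg.nonneg x hx) (hg.nonneg y hy))

lemma iterate (hf : IsMonoSubaddHomog f) : ∀ k : ℕ, IsMonoSubaddHomog f^[k]
  | 0 => IsMonoSubaddHomog.id
  | k + 1 => by rw [Function.iterate_succ']; exact hf.comp (hf.iterate k)

lemma of_mem_famPow {A : Set ((Fin n → ℝ) → Fin n → ℝ)}
    (hA : ∀ f ∈ A, IsMonoSubaddHomog f) :
    ∀ {m : ℕ}, ∀ f ∈ famPow A m, IsMonoSubaddHomog f
  | 0, _, rfl => IsMonoSubaddHomog.id
  | _ + 1, _, ⟨p, hp, q, hq, rfl⟩ => (hA p hp).comp (of_mem_famPow hA q hq)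

lemma map_zero (hf : IsMonoSubaddHomog f) : f 0 = 0 := by
  have h := hf.map_smul 2 two_pos 0 le_rfl
  rw [smul_zero, two_smul] at h
  simpa using h

lemma map_smul_of_nonneg (hf : IsMonoSubaddHomog f) {c : ℝ} (hc : 0 ≤ c) {x : Fin n → ℝ}
    (hx : 0 ≤ x) : f (c • x) = c • f x := by
  rcases hc.lt_or_eq with hc | rfl
  · exact hf.map_smul c hc x hx
  · rw [zero_smul, zero_smul, hf.map_zero]

lemma smul_apply_single_le (hf : IsMonoSubaddHomog f) {x : Fin n → ℝ} (hx : 0 ≤ x)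
    (j : Fin n) : x j • f (Pi.single j 1) ≤ f x := by
  have hsingle : Pi.single j (x j) = x j • Pi.single j (1 : ℝ) := by
    rw [← Pi.single_smul', smul_eq_mul, mul_one]
  rw [← hf.map_smul_of_nonneg (hx j) (single_one_nonneg _), ← hsingle]
  exact hf.mono _ _ (Pi.single_nonneg.2 (hx j)) (single_apply_le hx j)

lemma apply_le_sum_smul (hf : IsMonoSubaddHomog f) {x : Fin n → ℝ} (hx : 0 ≤ x) :
    f x ≤ ∑ j, x j • f (Pi.single j 1) := by
  calc f x = f (∑ j, Pi.single j (x j)) := by rw [Finset.univ_sum_single]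
    _ ≤ ∑ j, f (Pi.single j (x j)) :=
        Finset.le_sum_of_subadditive_on_pred f (0 ≤ ·) hf.map_zero.le
          (fun x y hx hy => hf.map_add_le x y hx hy) (fun _ _ => add_nonneg) _
          (fun j _ => Pi.single_nonneg.2 (hx j))
    _ = ∑ j, x j • f (Pi.single j 1) := by
        refine Finset.sum_congr rfl fun j _ => ?_
        rw [← hf.map_smul_of_nonneg (hx j) (single_one_nonneg _), ← Pi.single_smul',
          smul_eq_mul, mul_one]

lemma norm_apply_le (hf : IsMonoSubaddHomog f) {x : Fin n → ℝ} (hx : 0 ≤ x) :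
    ‖f x‖ ≤ (∑ i, ∑ j, f (Pi.single j 1) i) * ‖x‖ := by
  have hcoef : ∀ i j, 0 ≤ f (Pi.single j 1) i := fun i j => hf.nonneg _ (single_one_nonneg j) i
  have hrow : ∀ i, 0 ≤ ∑ j, f (Pi.single j 1) i := fun i =>
    Finset.sum_nonneg fun j _ => hcoef i j
  refine (pi_norm_le_iff_of_nonneg
    (mul_nonneg (Finset.sum_nonneg fun i _ => hrow i) (norm_nonneg x))).2 fun i => ?_
  rw [Real.norm_eq_abs, abs_of_nonneg (hf.nonneg x hx i)]
  calc f x i ≤ ∑ j, x j * f (Pi.single j 1) i := by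
        simpa using hf.apply_le_sum_smul hx i
    _ ≤ ∑ j, ‖x‖ * f (Pi.single j 1) i := by
        gcongr with j
        · exact hcoef i j
        · exact (le_abs_self _).trans (norm_le_pi_norm x j)
    _ = (∑ j, f (Pi.single j 1) i) * ‖x‖ := by rw [← Finset.mul_sum, mul_comm]
    _ ≤ (∑ i, ∑ j, f (Pi.single j 1) i) * ‖x‖ :=
        mul_le_mul_of_nonneg_right
          (Finset.single_le_sum (fun i _ => hrow i) (Finset.mem_univ i)) (norm_nonneg x)

lemma le_coneSpecRad_of_smul_le (hf : IsMonoSubaddHomog f) {x : Fin n → ℝ} (hx : 0 ≤ x)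
    (hx1 : ‖x‖ = 1) {c : ℝ} (hc : 0 ≤ c) (hcx : c • x ≤ f x) :
    c ≤ coneSpecRad f (stdCone n) := by
  have hiter : ∀ k : ℕ, c ^ k • x ≤ f^[k] x := by
    intro k
    induction k with
    | zero => simp
    | succ k ih =>
      rw [Function.iterate_succ_apply', pow_succ, mul_comm, mul_smul]
      calc c • c ^ k • x ≤ c ^ k • f x := by
            rw [smul_comm]; exact smul_le_smul_of_nonneg_left hcx (by positivity)
        _ = f (c ^ k • x) := (hf.map_smul_of_nonneg (by positivity) hx).symm
        _ ≤ f (f^[k] x) := hf.mono _ _ (smul_nonneg (by positivity) hx) ih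
  refine le_ciInf fun k => ?_
  have hk : c ^ (k : ℕ) ≤ opNormW (f^[k]) (stdCone n) :=
    calc c ^ (k : ℕ) = ‖c ^ (k : ℕ) • x‖ := by
          rw [norm_smul, hx1, mul_one, Real.norm_of_nonneg (by positivity)]
      _ ≤ ‖f^[k] x‖ := norm_le_norm_of_nonneg_of_le (smul_nonneg (by positivity) hx) (hiter k)
      _ ≤ opNormW (f^[k]) (stdCone n) :=
          norm_apply_le_opNormW (fun y hy => (hf.iterate k).norm_apply_le hy) hx hx1
  calc c = (c ^ (k : ℕ)) ^ (((k : ℕ) : ℝ)⁻¹) :=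
        (Real.pow_rpow_inv_natCast hc k.ne_zero).symm
    _ ≤ _ := Real.rpow_le_rpow (by positivity) hk (by positivity)

lemma mul_apply_single_le_coneSpecRad_comp (hf : IsMonoSubaddHomog f)
    (hg : IsMonoSubaddHomog g) (i j : Fin n) :
    g (Pi.single i 1) j * f (Pi.single j 1) i ≤ coneSpecRad (f ∘ g) (stdCone n) := by
  have he := single_one_nonneg (n := n) i
  refine (hf.comp hg).le_coneSpecRad_of_smul_le he (by simp [Pi.norm_single])
    (mul_nonneg (hg.nonneg _ he j) (hf.nonneg _ (single_one_nonneg _) i)) ?_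
  calc (g (Pi.single i 1) j * f (Pi.single j 1) i) • Pi.single i (1 : ℝ)
      = Pi.single i ((g (Pi.single i 1) j • f (Pi.single j 1)) i) := by
        rw [← Pi.single_smul', smul_eq_mul, mul_one, Pi.smul_apply, smul_eq_mul]
    _ ≤ Pi.single i (f (g (Pi.single i 1)) i) := by
        gcongr
        exact hf.smul_apply_single_le (hg.nonneg _ he) j i
    _ ≤ f (g (Pi.single i 1)) := single_apply_le (hf.nonneg _ (hg.nonneg _ he)) i

end IsMonoSubaddHomog

lemma IrreducibleFam.exists_famPow_apply_single_pos {A : Set ((Fin n → ℝ) → Fin n → ℝ)}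
    (hA : ∀ f ∈ A, IsMonoSubaddHomog f) (hirr : IrreducibleFam A) (i k : Fin n) :
    ∃ m, ∃ g ∈ famPow A m, 0 < g (Pi.single i 1) k := by
  -- the coordinates reachable from `i` span a face invariant under `A`, so they are all of `Fin n`
  set J : Set (Fin n) := {k | ∃ m, ∃ g ∈ famPow A m, 0 < g (Pi.single i 1) k}
  by_contra hk
  have hiJ : i ∈ J := ⟨0, id, rfl, by simp⟩
  have hface : ∀ f ∈ A, ∀ j ∈ J, ∀ l ∉ J, f (Pi.single j 1) l = 0 := by
    rintro f hf j ⟨m, g, hg, hpos⟩ l hl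
    have hgi := (IsMonoSubaddHomog.of_mem_famPow hA g hg).nonneg _ (single_one_nonneg i)
    have hzero : f (g (Pi.single i 1)) l ≤ 0 :=
      not_lt.1 fun h => hl ⟨m + 1, f ∘ g, ⟨f, hf, g, hg, rfl⟩, h⟩
    have hprod := ((hA f hf).smul_apply_single_le hgi j l).trans hzero
    exact le_antisymm (nonpos_of_mul_nonpos_right hprod hpos)
      ((hA f hf).nonneg _ (single_one_nonneg j) l)
  refine hirr ⟨J, ⟨i, hiJ⟩, fun h => hk (h.symm ▸ mem_univ k : k ∈ J), fun f hf x hx =>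
    ⟨(hA f hf).nonneg x hx.1, fun l hl => le_antisymm ?_ ((hA f hf).nonneg x hx.1 l)⟩⟩
  refine ((hA f hf).apply_le_sum_smul hx.1 l).trans_eq ?_
  rw [Finset.sum_apply]
  refine Finset.sum_eq_zero fun j _ => ?_
  by_cases hj : j ∈ J
  · simp [hface f hf j hj l hl]
  · simp [hx.2 j hj]

end StdCone

theorem statement10 {n : ℕ} (A : Set ((Fin n → ℝ) → Fin n → ℝ))
    (hA : ∀ f ∈ A, HomogOn f (stdCone n) ∧ OrderPresOn f (stdCone n) ∧
      SubaddOn f (stdCone n))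
    (hbdd : BoundedFamOn A (stdCone n))
    (hirr : IrreducibleFam A)
    (hr : genRad A (stdCone n) = 1) :
    ∃ C : ℝ, ∀ m : ℕ, 0 < m → ∀ f ∈ famPow A m, ∀ x ∈ stdCone n, ‖f x‖ ≤ C * ‖x‖ := by
  have hA' : ∀ f ∈ A, IsMonoSubaddHomog f := fun f hf =>
    .of_homogOn_orderPresOn_subaddOn (hA f hf).1 (hA f hf).2.1 (hA f hf).2.2
  choose m g hg hpos using hirr.exists_famPow_apply_single_pos hA'
  have hentry : ∀ k, 0 < k → ∀ f ∈ famPow A k, ∀ i j,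
      f (Pi.single j 1) i ≤ (g i j (Pi.single i 1) j)⁻¹ := by
    intro k hk f hf i j
    by_contra! hlt
    have hrad : 1 < coneSpecRad (f ∘ g i j) (stdCone n) :=
      ((inv_lt_iff_one_lt_mul₀' (hpos i j)).1 hlt).trans_le
        ((IsMonoSubaddHomog.of_mem_famPow hA' f hf).mul_apply_single_le_coneSpecRad_comp
          (IsMonoSubaddHomog.of_mem_famPow hA' _ (hg i j)) i j)
    exact (one_lt_genRad_of_one_lt_coneSpecRad (fun f hf => (hA f hf).1.1) hbdd
      (Nat.add_pos_left hk _) (famPow_add hf (hg i j)) hrad).ne' hr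
  refine ⟨∑ i, ∑ j, (g i j (Pi.single i 1) j)⁻¹, fun k hk f hf x hx => ?_⟩
  refine ((IsMonoSubaddHomog.of_mem_famPow hA' f hf).norm_apply_le hx).trans ?_
  gcongr with i _ j _
  exact hentry k hk f hf i j
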